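/- In the STRIPS instance of the Bylander-style construction with initial state ∅ (i.e., after deleting a), there exists a plan achieving goal {c₁,…,c_k} if and only if the clause set F is satisfiable. -/

import Mathlib

/-!
From the initial state `∅` no operator ever adds `a`, so `e` is never applicable, and `plᵢ`
(resp. `nlᵢ`) can fire only while `fᵢ` (resp. `tᵢ`) is false. Hence every reachable state
contains at most one of `tᵢ`, `fᵢ`, and each `c_j` in it was added by a literal of `γ_j` that
holds in it; reading `tᵢ` as "`xᵢ` is true" gives a satisfying assignment. Conversely, for a
satisfying assignment apply `plᵢ` or `nlᵢ` according to it for each variable, and then, for each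
clause, the operator of one of its true literals.
-/

/-- A STRIPS operator `(φ, η, α, β)`: positive preconditions `pre`, negative
preconditions `npre`, positive effects `add`, negative effects `del`. -/
structure Op (C : Type*) where
  pre : Finset C
  npre : Finset C
  add : Finset C
  del : Finset C

/-- `Reaches S L S'` holds when the operator sequence `L` is executable from state `S`
(each operator `(φ,η,α,β)` is executable in a state `T` iff `φ ⊆ T` and `η ∩ T = ∅`,
and transforms `T` into `(T ∪ α) \ β`) and leads to state `S'`. -/
inductive Reaches {C : Type*} [DecidableEq C] : Finset C → List (Op C) → Finset C → Prop
  | nil (S : Finset C) : Reaches S [] S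
  | cons {S S' : Finset C} (o : Op C) (L : List (Op C)) :
      o.pre ⊆ S → (∀ c ∈ o.npre, c ∉ S) →
      Reaches ((S ∪ o.add) \ o.del) L S' → Reaches S (o :: L) S'

/-- Conditions of the Bylander-style instance: `A`, `T i`, `Fc i` (for `tᵢ`, `fᵢ`) and
`C j` (for `c_j`). -/
inductive Cond
  | A
  | T (i : ℕ)
  | Fc (i : ℕ)
  | C (j : ℕ)
deriving DecidableEq

/-- The condition `tᵢ` or `fᵢ` corresponding to a literal. -/
def condOfLit (l : ℕ × Bool) : Cond := if l.2 then Cond.T l.1 else Cond.Fc l.1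

/-- The operator `e = ({a}, ∅, {c₁,…,c_k}, ∅)`. -/
def eOp (k : ℕ) : Op Cond := ⟨{Cond.A}, ∅, (Finset.range k).image Cond.C, ∅⟩

/-- The operators of the Bylander-style instance built from the clauses `γ 0, …, γ (k-1)`
over variables `x_0, …, x_(n-1)`: `plᵢ = (∅,{fᵢ,a},{tᵢ},∅)`, `nlᵢ = (∅,{tᵢ,a},{fᵢ},∅)`,
for each occurrence of a literal `l` in clause `γ j` an operator `({cond l},∅,{c_j},∅)`,
and `e = ({a},∅,{c₁,…,c_k},∅)`. -/
def Ops (n k : ℕ) (γ : ℕ → Finset (ℕ × Bool)) : Set (Op Cond) :=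
  {o | (∃ i < n, o = ⟨∅, {Cond.Fc i, Cond.A}, {Cond.T i}, ∅⟩) ∨
       (∃ i < n, o = ⟨∅, {Cond.T i, Cond.A}, {Cond.Fc i}, ∅⟩) ∨
       (∃ j < k, ∃ l ∈ γ j, o = ⟨{condOfLit l}, ∅, {Cond.C j}, ∅⟩) ∨
       o = eOp k}

section Reaches

variable {C : Type*} [DecidableEq C]

theorem Reaches.append {S S' S'' : Finset C} {L L' : List (Op C)}
    (h : Reaches S L S') (h' : Reaches S' L' S'') : Reaches S (L ++ L') S'' := by
  induction h with
  | nil => simpa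
  | cons o L hpre hnpre _ ih => exact .cons o _ hpre hnpre (ih h')

theorem Reaches.invariant {P : Finset C → Prop} {O : Set (Op C)}
    (hP : ∀ o ∈ O, ∀ S, o.pre ⊆ S → (∀ c ∈ o.npre, c ∉ S) → P S → P ((S ∪ o.add) \ o.del))
    {S S' : Finset C} {L : List (Op C)} (hL : ∀ o ∈ L, o ∈ O) (h : Reaches S L S')
    (hS : P S) : P S' := by
  induction h with
  | nil => exact hS
  | cons o L hpre hnpre _ ih =>
    exact ih (fun o' ho' => hL o' (List.mem_cons_of_mem _ ho'))
      (hP o (hL o List.mem_cons_self) _ hpre hnpre hS)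

theorem exists_reaches_of_del_eq_empty {S : Finset C} {L : List (Op C)}
    (hdel : ∀ o ∈ L, o.del = ∅) (hpre : ∀ o ∈ L, o.pre ⊆ S)
    (hnpre : ∀ o ∈ L, ∀ c ∈ o.npre, c ∉ S ∧ ∀ o' ∈ L, c ∉ o'.add) :
    ∃ S', Reaches S L S' ∧ S ⊆ S' ∧ ∀ o ∈ L, o.add ⊆ S' := by
  induction L generalizing S with
  | nil => exact ⟨S, .nil S, subset_rfl, by simp⟩
  | cons o L ih =>
    simp only [List.mem_cons, forall_eq_or_imp] at hdel hpre hnpre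
    obtain ⟨S', hR, hSS', hadd⟩ := ih (S := S ∪ o.add) hdel.2
      (fun o' ho' => (hpre.2 o' ho').trans Finset.subset_union_left)
      (fun o' ho' c hc => by
        obtain ⟨hcS, hcadd⟩ := hnpre.2 o' ho' c hc
        exact ⟨by simp [hcS, hcadd.1], hcadd.2⟩)
    refine ⟨S', .cons o L hpre.1 (fun c hc => (hnpre.1 c hc).1)
      (by rwa [hdel.1, Finset.sdiff_empty]), Finset.subset_union_left.trans hSS', ?_⟩
    simp only [List.mem_cons, forall_eq_or_imp]
    exact ⟨Finset.subset_union_right.trans hSS', hadd⟩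

end Reaches

theorem condOfLit_injective : Function.Injective condOfLit := by
  rintro ⟨i, _ | _⟩ ⟨i', _ | _⟩ h <;> simp_all [condOfLit]

theorem condOfLit_ne_A (l : ℕ × Bool) : condOfLit l ≠ Cond.A := by
  unfold condOfLit; split <;> simp

def Justified (k : ℕ) (γ : ℕ → Finset (ℕ × Bool)) (S : Finset Cond) : Prop :=
  Cond.A ∉ S ∧ (∀ i, Cond.T i ∈ S → Cond.Fc i ∉ S) ∧
    ∀ j < k, Cond.C j ∈ S → ∃ l ∈ γ j, condOfLit l ∈ S

theorem justified_empty (k : ℕ) (γ : ℕ → Finset (ℕ × Bool)) : Justified k γ ∅ := by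
  simp [Justified]

theorem Justified.step {n k : ℕ} {γ : ℕ → Finset (ℕ × Bool)} {o : Op Cond} (ho : o ∈ Ops n k γ)
    {S : Finset Cond} (hpre : o.pre ⊆ S) (hnpre : ∀ c ∈ o.npre, c ∉ S) (hS : Justified k γ S) :
    Justified k γ ((S ∪ o.add) \ o.del) := by
  obtain ⟨hA, hTF, hC⟩ := hS
  rcases ho with ⟨i, -, rfl⟩ | ⟨i, -, rfl⟩ | ⟨j, -, l, hl, rfl⟩ | rfl
  all_goals simp only [Finset.subset_iff, Finset.mem_singleton, Finset.mem_insert] at hpre hnpre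
  all_goals simp only [Justified, Finset.sdiff_empty, Finset.mem_union, Finset.mem_singleton]
  · grind
  · grind
  · grind [condOfLit_ne_A]
  · exact absurd (hpre (by simp [eOp])) hA

theorem Justified.satisfies {k : ℕ} {γ : ℕ → Finset (ℕ × Bool)} {S : Finset Cond}
    (hS : Justified k γ S) (hC : ∀ j < k, Cond.C j ∈ S) :
    ∀ j < k, ∃ l ∈ γ j, decide (Cond.T l.1 ∈ S) = l.2 := by
  intro j hj
  obtain ⟨l, hl, hlS⟩ := hS.2.2 j hj (hC j hj)
  refine ⟨l, hl, ?_⟩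
  rcases l with ⟨i, _ | _⟩
  · exact decide_eq_false (hS.2.1 i · hlS)
  · exact decide_eq_true hlS

def litOp (l : ℕ × Bool) : Op Cond := ⟨∅, {condOfLit (l.1, !l.2), Cond.A}, {condOfLit l}, ∅⟩

def clauseOp (j : ℕ) (l : ℕ × Bool) : Op Cond := ⟨{condOfLit l}, ∅, {Cond.C j}, ∅⟩

theorem litOp_mem_Ops {n k : ℕ} {γ : ℕ → Finset (ℕ × Bool)} {l : ℕ × Bool} (hl : l.1 < n) :
    litOp l ∈ Ops n k γ := by
  rcases l with ⟨i, _ | _⟩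
  · exact Or.inr (Or.inl ⟨i, hl, rfl⟩)
  · exact Or.inl ⟨i, hl, rfl⟩

theorem clauseOp_mem_Ops {n k j : ℕ} {γ : ℕ → Finset (ℕ × Bool)} {l : ℕ × Bool} (hj : j < k)
    (hl : l ∈ γ j) : clauseOp j l ∈ Ops n k γ :=
  Or.inr (Or.inr (Or.inl ⟨j, hj, l, hl, rfl⟩))

theorem exists_reaches_litOps (n : ℕ) (I : ℕ → Bool) :
    ∃ S, Reaches ∅ ((List.range n).map fun i => litOp (i, I i)) S ∧
      ∀ i < n, condOfLit (i, I i) ∈ S := by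
  have opposite_ne (i i' : ℕ) : condOfLit (i, !I i) ≠ condOfLit (i', I i') := fun h => by
    obtain ⟨rfl, h⟩ := Prod.mk.inj (condOfLit_injective h)
    simp at h
  obtain ⟨S, hR, -, hadd⟩ := exists_reaches_of_del_eq_empty
    (S := ∅) (L := (List.range n).map fun i => litOp (i, I i))
    (by simp [litOp]) (by simp [litOp])
    (by simp [litOp, opposite_ne, (condOfLit_ne_A _).symm])
  exact ⟨S, hR, fun i hi => hadd _ (List.mem_map_of_mem (List.mem_range.2 hi)) (by simp [litOp])⟩

theorem exists_reaches_clauseOps (n : ℕ) {k : ℕ} {γ : ℕ → Finset (ℕ × Bool)} {S : Finset Cond}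
    (h : ∀ j < k, ∃ l ∈ γ j, condOfLit l ∈ S) :
    ∃ L S', (∀ o ∈ L, o ∈ Ops n k γ) ∧ Reaches S L S' ∧ ∀ j < k, Cond.C j ∈ S' := by
  choose lit hlit hlitS using fun j : Fin k => h j j.2
  obtain ⟨S', hR, -, hadd⟩ := exists_reaches_of_del_eq_empty
    (S := S) (L := (List.finRange k).map fun j : Fin k => clauseOp j (lit j))
    (by simp [clauseOp]) (by simpa [clauseOp]) (by simp [clauseOp])
  refine ⟨_, S', ?_, hR, fun j hj => hadd _ (List.mem_map_of_mem (List.mem_finRange ⟨j, hj⟩)) ?_⟩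
  · simp only [List.mem_map, List.mem_finRange, true_and, forall_exists_index,
      forall_apply_eq_imp_iff]
    exact fun j => clauseOp_mem_Ops j.2 (hlit j)
  · simp [clauseOp]

/-- In the Bylander-style instance with initial state `∅` (i.e., after deleting `a`),
there exists a plan achieving the goal `{c₁,…,c_k}` iff the clause set is satisfiable. -/
theorem stmt16 (n k : ℕ) (γ : ℕ → Finset (ℕ × Bool))
    (hvars : ∀ j < k, ∀ l ∈ γ j, l.1 < n) :
    (∃ (L : List (Op Cond)) (S' : Finset Cond),
        (∀ o ∈ L, o ∈ Ops n k γ) ∧ Reaches ∅ L S' ∧ ∀ j < k, Cond.C j ∈ S') ↔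
      (∃ I : ℕ → Bool, ∀ j < k, ∃ l ∈ γ j, I l.1 = l.2) := by
  constructor
  · rintro ⟨L, S, hL, hR, hC⟩
    have hS : Justified k γ S :=
      hR.invariant (fun _ ho _ => Justified.step ho) hL (justified_empty k γ)
    exact ⟨fun i => decide (Cond.T i ∈ S), hS.satisfies hC⟩
  · rintro ⟨I, hI⟩
    obtain ⟨S₁, hR₁, hS₁⟩ := exists_reaches_litOps n I
    obtain ⟨L₂, S₂, hL₂, hR₂, hC⟩ := exists_reaches_clauseOps n (S := S₁) fun j hj => by
      obtain ⟨l, hl, hIl⟩ := hI j hj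
      exact ⟨l, hl, by simpa [hIl] using hS₁ l.1 (hvars j hj l hl)⟩
    refine ⟨_ ++ L₂, S₂, ?_, hR₁.append hR₂, hC⟩
    simp only [List.mem_append, List.mem_map, List.mem_range]
    rintro o (⟨i, hi, rfl⟩ | ho)
    exacts [litOp_mem_Ops hi, hL₂ o ho]
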